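/- arXiv:2001.02425 — 4 statements merged into one kernel-verified Lean document; each statement's English description precedes it below -/
import Mathlib

section
/- Fix an integer n ≥ 0 and real parameters p, q. In the ring of formal power series ℝ[[X]], the generating function of the restricted partition function has the product form: (∏_{j=0}^{n} (1 − (1 + j·p + (n−j)·q)·X)) · (∑_{m=0}^{∞} R(n+1+m, n; p, q)·X^m) = 1. Equivalently, ∑_{L ≥ n+1} R(L, n; p, q)·x^{L−n−1} = ∏_{j=0}^{n} 1/(1 − (1 + j·p + (n−j)·q)·x) as formal power series. -/
open Finset

/-- The stationary weight of a word `a` with entries in `{0,1}` (encoded as `Fin 2`):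
the product over positions `i` with `a i = 0` of `1 + p·m_i(a) + q·n_i(a)`,
where `m_i(a)` (resp. `n_i(a)`) is the number of `1`'s strictly before (resp. after) `i`. -/
noncomputable def wt (p q : ℝ) {m : ℕ} (a : Fin m → Fin 2) : ℝ :=
  ∏ i ∈ univ.filter (fun i => a i = 0),
    (1 + p * ((univ.filter (fun j => j < i ∧ a j = 1)).card : ℝ)
       + q * ((univ.filter (fun j => i < j ∧ a j = 1)).card : ℝ))

/-- The number of `1`'s in the word `a`. -/
def ones {m : ℕ} (a : Fin m → Fin 2) : ℕ := (univ.filter (fun i => a i = 1)).card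

/-- The restricted partition function `R(L, n; p, q)`: the sum of the weights `wt p q a`
over all words `a` of length `L - 1` with entries in `{0,1}` having exactly `n` ones. -/
noncomputable def R (L n : ℕ) (p q : ℝ) : ℝ :=
  ∑ a ∈ univ.filter (fun a : Fin (L - 1) → Fin 2 => ones a = n), wt p q a

/-!
Let `R_r(n, L)` be the sum of the weights of the words of length `L` with `n` ones, where every
zero is weighted as if `r` further ones stood in front of the word. Splitting off the first
letter gives `R_r(n, L+1) = (1 + r p + n q) R_r(n, L) + R_{r+1}(n-1, L)`: a leading zero sees `r`
ones before it and `n` after it, while a leading one only raises the shift. On generating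
functions `G_{r,n} = ∑ₘ R_r(n, n+m) Xᵐ` this reads
`(1 - (1 + r p + n q) X) G_{r,n} = G_{r+1,n-1}` and `(1 - (1 + r p) X) G_{r,0} = 1`, so `n + 1`
such steps starting from `r = 0` give the product.
-/

open PowerSeries

lemma one_sub_C_mul_X_mul_mk_eq {S : Type*} [Ring S] {c : S} {f : ℕ → S} {g : S⟦X⟧}
    (h₀ : f 0 = coeff 0 g) (hsucc : ∀ k, f (k + 1) = c * f k + coeff (k + 1) g) :
    (1 - C c * X) * PowerSeries.mk f = g := by
  ext (_ | k)
  · simp [h₀]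
  · simp [sub_mul, mul_assoc, coeff_succ_X_mul, hsucc]

section Words

variable {L : ℕ}

def onesBefore (a : Fin L → Fin 2) (i : Fin L) : ℕ := #{j | j < i ∧ a j = 1}

def onesAfter (a : Fin L → Fin 2) (i : Fin L) : ℕ := #{j | i < j ∧ a j = 1}

lemma ones_le (a : Fin L → Fin 2) : ones a ≤ L :=
  (card_filter_le _ _).trans_eq (card_fin L)

lemma ones_cons (b : Fin 2) (a : Fin L → Fin 2) :
    ones (Fin.cons b a : Fin (L + 1) → Fin 2) = (if b = 1 then 1 else 0) + ones a := by
  simp only [ones, card_filter, Fin.sum_univ_succ, Fin.cons_zero, Fin.cons_succ]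

lemma onesBefore_cons_zero (b : Fin 2) (a : Fin L → Fin 2) :
    onesBefore (Fin.cons b a : Fin (L + 1) → Fin 2) 0 = 0 := by
  simp [onesBefore]

lemma onesAfter_cons_zero (b : Fin 2) (a : Fin L → Fin 2) :
    onesAfter (Fin.cons b a : Fin (L + 1) → Fin 2) 0 = ones a := by
  simp only [onesAfter, ones, card_filter, Fin.sum_univ_succ, Fin.cons_zero, Fin.cons_succ,
    lt_self_iff_false, false_and, if_false, zero_add, Fin.succ_pos, true_and]

lemma onesBefore_cons_succ (b : Fin 2) (a : Fin L → Fin 2) (i : Fin L) :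
    onesBefore (Fin.cons b a : Fin (L + 1) → Fin 2) i.succ =
      (if b = 1 then 1 else 0) + onesBefore a i := by
  simp only [onesBefore, card_filter, Fin.sum_univ_succ, Fin.cons_zero, Fin.cons_succ,
    Fin.succ_pos, true_and, Fin.succ_lt_succ_iff]

lemma onesAfter_cons_succ (b : Fin 2) (a : Fin L → Fin 2) (i : Fin L) :
    onesAfter (Fin.cons b a : Fin (L + 1) → Fin 2) i.succ = onesAfter a i := by
  simp only [onesAfter, card_filter, Fin.sum_univ_succ, Fin.cons_zero, Fin.cons_succ,
    Fin.succ_lt_succ_iff, Fin.not_lt_zero, false_and, if_false, zero_add]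

end Words

section ShiftedWeight

variable (p q r : ℝ)

noncomputable def shiftedWt {L : ℕ} (a : Fin L → Fin 2) : ℝ :=
  ∏ i, if a i = 0 then 1 + p * (r + onesBefore a i) + q * onesAfter a i else 1

lemma wt_eq_shiftedWt_zero {L : ℕ} (a : Fin L → Fin 2) : wt p q a = shiftedWt p q 0 a := by
  simp only [wt, prod_filter, shiftedWt, onesBefore, onesAfter, zero_add]

lemma shiftedWt_cons_zero {L : ℕ} (a : Fin L → Fin 2) :
    shiftedWt p q r (Fin.cons 0 a) = (1 + p * r + q * ones a) * shiftedWt p q r a := by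
  rw [shiftedWt, Fin.prod_univ_succ, shiftedWt]
  congr 1
  · simp [onesBefore_cons_zero, onesAfter_cons_zero]
  · refine prod_congr rfl fun i _ => ?_
    simp [onesBefore_cons_succ, onesAfter_cons_succ]

lemma shiftedWt_cons_one {L : ℕ} (a : Fin L → Fin 2) :
    shiftedWt p q r (Fin.cons 1 a) = shiftedWt p q (r + 1) a := by
  rw [shiftedWt, Fin.prod_univ_succ, shiftedWt, Fin.cons_zero, if_neg (by decide), one_mul]
  refine prod_congr rfl fun i _ => ?_
  simp only [Fin.cons_succ, onesBefore_cons_succ, onesAfter_cons_succ]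
  split_ifs <;> push_cast <;> ring

noncomputable def shiftedR (n L : ℕ) : ℝ :=
  ∑ a : Fin L → Fin 2, if ones a = n then shiftedWt p q r a else 0

lemma R_succ_eq_shiftedR_zero (n L : ℕ) : R (L + 1) n p q = shiftedR p q 0 n L := by
  simp only [R, shiftedR, sum_filter, wt_eq_shiftedWt_zero]
  rfl

lemma shiftedR_zero_zero : shiftedR p q r 0 0 = 1 := by
  simp [shiftedR, ones, shiftedWt]

lemma shiftedR_of_lt {n L : ℕ} (h : L < n) : shiftedR p q r n L = 0 :=
  sum_eq_zero fun a _ => if_neg fun ha => by have := ones_le a; omega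

lemma shiftedR_succ (n L : ℕ) :
    shiftedR p q r n (L + 1) = (1 + p * r + q * n) * shiftedR p q r n L +
      ∑ a : Fin L → Fin 2, if ones a + 1 = n then shiftedWt p q (r + 1) a else 0 := by
  rw [shiftedR, ← (Fin.consEquiv fun _ => Fin 2).sum_comp, Fintype.sum_prod_type,
    Fin.sum_univ_two, shiftedR, mul_sum]
  congr 1 <;> refine sum_congr rfl fun a _ => ?_ <;>
    simp only [Fin.consEquiv, Equiv.coe_fn_mk, ones_cons]
  · by_cases h : ones a = n <;> simp [shiftedWt_cons_zero, h]
  · simp [shiftedWt_cons_one, add_comm]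

lemma shiftedR_succ_zero (L : ℕ) :
    shiftedR p q r 0 (L + 1) = (1 + p * r) * shiftedR p q r 0 L := by
  simp [shiftedR_succ]

lemma shiftedR_succ_succ (n L : ℕ) :
    shiftedR p q r (n + 1) (L + 1) =
      (1 + p * r + q * (n + 1)) * shiftedR p q r (n + 1) L + shiftedR p q (r + 1) n L := by
  rw [shiftedR_succ]
  simp [shiftedR]

end ShiftedWeight

section GeneratingFunction

variable (p q : ℝ)

noncomputable def shiftedGF (r : ℝ) (n : ℕ) : ℝ⟦X⟧ :=
  PowerSeries.mk fun m => shiftedR p q r n (n + m)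

lemma one_sub_mul_shiftedGF_zero (r : ℝ) : (1 - C (1 + p * r) * X) * shiftedGF p q r 0 = 1 := by
  refine one_sub_C_mul_X_mul_mk_eq ?_ fun k => ?_
  · simp [shiftedR_zero_zero]
  · simp [shiftedR_succ_zero]

lemma one_sub_mul_shiftedGF_succ (r : ℝ) (n : ℕ) :
    (1 - C (1 + p * r + q * (n + 1)) * X) * shiftedGF p q r (n + 1) =
      shiftedGF p q (r + 1) n := by
  refine one_sub_C_mul_X_mul_mk_eq ?_ fun k => ?_ <;> simp only [shiftedGF, coeff_mk]
  · rw [shiftedR_succ_succ, shiftedR_of_lt p q r n.lt_succ_self, mul_zero, zero_add,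
      add_zero]
  · rw [show n + 1 + (k + 1) = n + 1 + k + 1 by ring, shiftedR_succ_succ,
      show n + 1 + k = n + (k + 1) by ring]

lemma prod_mul_shiftedGF (n : ℕ) (r : ℝ) :
    (∏ j ∈ range (n + 1), (1 - C (1 + (r + j) * p + ((n - j : ℕ) : ℝ) * q) * X)) *
      shiftedGF p q r n = 1 := by
  induction n generalizing r with
  | zero => simpa [mul_comm] using one_sub_mul_shiftedGF_zero p q r
  | succ n ih =>
    have hfirst : 1 + (r + ((0 : ℕ) : ℝ)) * p + ((n + 1 - 0 : ℕ) : ℝ) * q =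
        1 + p * r + q * (n + 1) := by
      push_cast
      ring
    have hshift (j : ℕ) :
        1 + (r + ((j + 1 : ℕ) : ℝ)) * p + ((n + 1 - (j + 1) : ℕ) : ℝ) * q =
          1 + (r + 1 + j) * p + ((n - j : ℕ) : ℝ) * q := by
      rw [Nat.add_sub_add_right]
      push_cast
      ring
    rw [prod_range_succ', mul_assoc, hfirst, one_sub_mul_shiftedGF_succ]
    simpa only [hshift] using ih (r + 1)

end GeneratingFunction

/-- the product form of the ordinary generating function of the restricted
partition function, as an identity of formal power series in `ℝ[[X]]`. -/
theorem R_ogf (n : ℕ) (p q : ℝ) :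
    (∏ j ∈ Finset.range (n + 1),
        (1 - PowerSeries.C (1 + (j : ℝ) * p + ((n - j : ℕ) : ℝ) * q) * PowerSeries.X))
      * PowerSeries.mk (fun m => R (n + 1 + m) n p q) = 1 := by
  have hR (m : ℕ) : R (n + 1 + m) n p q = shiftedR p q 0 n (n + m) := by
    rw [show n + 1 + m = n + m + 1 by ring, R_succ_eq_shiftedR_zero]
  simpa only [shiftedGF, zero_add, hR] using prod_mul_shiftedGF p q n 0
end

section
/- Fix an integer n ≥ 0 and real parameters p, q with p ≠ q, and let y be an arbitrary real number. Then the family (m ↦ R(n+1+m, n; p, q)·y^{n+m}/(n+m)!), indexed by m ∈ ℕ, has sum (HasSum) equal to (exp(y)/n!)·((exp(p·y) − exp(q·y))/(p−q))^{n}. -/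
/-!
Replace the constant `1` in each factor of the weight by a parameter `c` and let
`Z_c(k, n)` (`wtSum c p q k n`) be the resulting sum over words of length `k` with `n` ones,
so that `R (n + 1 + m) n p q = Z_1(n + m, n)`. Removing the first letter of a word gives
`Z_c(k+1, n+1) = (c + q(n+1)) Z_c(k, n+1) + Z_{c+p}(k, n)`; reversing words swaps `p` and `q`,
so removing the last letter gives the same recursion with `p` and `q` exchanged. Subtracting the
two yields the divided-difference identity `Z_{c+p}(k, n) - Z_{c+q}(k, n) = (n+1)(p-q) Z_c(k, n+1)`.
Summed against `y^k / k!`, and since `Z_c(n, n) = 1`, this expresses the `(n+1)`-st column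
generating function as a divided difference of the `n`-th one in `c`, and induction from
`Z_c(k, 0) = c^k`, whose series is `exp(c y)`, gives the closed form.
-/

open Finset

section Words

variable {A : Type*} [CommRing A]

def wtBase (c p q : A) {k : ℕ} (a : Fin k → Fin 2) : A :=
  ∏ i ∈ univ.filter (fun i => a i = 0),
    (c + p * ((univ.filter (fun j => j < i ∧ a j = 1)).card : A)
       + q * ((univ.filter (fun j => i < j ∧ a j = 1)).card : A))

def wtSum (c p q : A) (k n : ℕ) : A :=
  ∑ a ∈ univ.filter (fun a : Fin k → Fin 2 => ones a = n), wtBase c p q a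

theorem ones_cons_zero {k : ℕ} (b : Fin k → Fin 2) :
    ones (Fin.cons 0 b : Fin (k + 1) → Fin 2) = ones b := by
  rw [ones, ones, card_filter, card_filter, Fin.sum_univ_succ]
  simp

theorem ones_cons_one {k : ℕ} (b : Fin k → Fin 2) :
    ones (Fin.cons 1 b : Fin (k + 1) → Fin 2) = ones b + 1 := by
  rw [ones, ones, card_filter, card_filter, Fin.sum_univ_succ]
  simp [add_comm]

theorem card_filter_lt_succ_cons {k : ℕ} (t : Fin 2) (b : Fin k → Fin 2) (i : Fin k) :
    #{j | j < i.succ ∧ (Fin.cons t b : Fin (k + 1) → Fin 2) j = 1}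
      = (if t = 1 then 1 else 0) + #{j | j < i ∧ b j = 1} := by
  rw [card_filter, card_filter, Fin.sum_univ_succ]
  simp [Fin.succ_pos]

theorem card_filter_succ_lt_cons {k : ℕ} (t : Fin 2) (b : Fin k → Fin 2) (i : Fin k) :
    #{j | i.succ < j ∧ (Fin.cons t b : Fin (k + 1) → Fin 2) j = 1}
      = #{j | i < j ∧ b j = 1} := by
  rw [card_filter, card_filter, Fin.sum_univ_succ]
  simp

theorem card_filter_zero_lt_cons {k : ℕ} (t : Fin 2) (b : Fin k → Fin 2) :
    #{j | 0 < j ∧ (Fin.cons t b : Fin (k + 1) → Fin 2) j = 1} = ones b := by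
  rw [ones, card_filter, card_filter, Fin.sum_univ_succ]
  simp [Fin.succ_pos]

theorem wtBase_cons_zero (c p q : A) {k : ℕ} (b : Fin k → Fin 2) :
    wtBase c p q (Fin.cons 0 b : Fin (k + 1) → Fin 2) = (c + q * ones b) * wtBase c p q b := by
  simp [wtBase, prod_filter, Fin.prod_univ_succ, card_filter_lt_succ_cons,
    card_filter_succ_lt_cons, card_filter_zero_lt_cons]

theorem wtBase_cons_one (c p q : A) {k : ℕ} (b : Fin k → Fin 2) :
    wtBase c p q (Fin.cons 1 b : Fin (k + 1) → Fin 2) = wtBase (c + p) p q b := by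
  simp only [wtBase, prod_filter, Fin.prod_univ_succ, Fin.cons_zero, Fin.cons_succ,
    card_filter_lt_succ_cons, card_filter_succ_lt_cons, if_true, Nat.cast_add, Nat.cast_one,
    one_ne_zero, if_false, one_mul]
  refine prod_congr rfl fun i _ => ?_
  split_ifs <;> ring

theorem sum_fun_fin_two_succ {M : Type*} [AddCommMonoid M] {k : ℕ}
    (F : (Fin (k + 1) → Fin 2) → M) :
    ∑ a, F a = ∑ b, F (Fin.cons 0 b) + ∑ b, F (Fin.cons 1 b) := by
  rw [← (Fin.consEquiv fun _ => Fin 2).sum_comp, Fintype.sum_prod_type, Fin.sum_univ_two]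
  rfl

theorem wtSum_succ_succ (c p q : A) (k n : ℕ) :
    wtSum c p q (k + 1) (n + 1)
      = (c + q * (n + 1)) * wtSum c p q k (n + 1) + wtSum (c + p) p q k n := by
  simp only [wtSum, sum_filter, sum_fun_fin_two_succ, ones_cons_zero, ones_cons_one, mul_sum,
    wtBase_cons_zero, wtBase_cons_one, add_left_inj]
  refine Finset.sum_congr rfl fun b _ => ?_
  split_ifs with h
  · rw [h]; push_cast; ring
  · rw [mul_zero]

theorem wtSum_succ_zero (c p q : A) (k : ℕ) :
    wtSum c p q (k + 1) 0 = c * wtSum c p q k 0 := by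
  simp +contextual [wtSum, sum_filter, sum_fun_fin_two_succ, ones_cons_zero, ones_cons_one,
    mul_sum, wtBase_cons_zero]

theorem wtSum_zero_zero (c p q : A) : wtSum c p q 0 0 = 1 := by
  simp [wtSum, wtBase, ones]

theorem wtSum_of_lt (c p q : A) {k n : ℕ} (h : k < n) : wtSum c p q k n = 0 := by
  refine sum_eq_zero fun a ha => absurd (mem_filter.1 ha).2 ?_
  have : ones a ≤ k := (card_filter_le _ _).trans_eq (card_fin k)
  omega

theorem wtSum_zero_right (c p q : A) (k : ℕ) : wtSum c p q k 0 = c ^ k := by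
  induction k with
  | zero => rw [wtSum_zero_zero, pow_zero]
  | succ k ih => rw [wtSum_succ_zero, ih, pow_succ']

theorem wtSum_self (c p q : A) (n : ℕ) : wtSum c p q n n = 1 := by
  induction n generalizing c with
  | zero => exact wtSum_zero_zero c p q
  | succ n ih => rw [wtSum_succ_succ, wtSum_of_lt _ _ _ n.lt_succ_self, ih, mul_zero, zero_add]

theorem ones_comp_rev {k : ℕ} (a : Fin k → Fin 2) : ones (a ∘ Fin.rev) = ones a := by
  rw [ones, ones, card_filter, card_filter]
  exact Fintype.sum_equiv Fin.revPerm _ _ fun j => by simp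

theorem card_filter_lt_comp_rev {k : ℕ} (a : Fin k → Fin 2) (i : Fin k) :
    #{j | j < i ∧ a j.rev = 1} = #{j | i.rev < j ∧ a j = 1} := by
  rw [card_filter, card_filter]
  exact Fintype.sum_equiv Fin.revPerm _ _ fun j => by simp [Fin.rev_lt_rev]

theorem card_filter_gt_comp_rev {k : ℕ} (a : Fin k → Fin 2) (i : Fin k) :
    #{j | i < j ∧ a j.rev = 1} = #{j | j < i.rev ∧ a j = 1} := by
  rw [card_filter, card_filter]
  exact Fintype.sum_equiv Fin.revPerm _ _ fun j => by simp [Fin.rev_lt_rev]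

theorem wtBase_comp_rev (c p q : A) {k : ℕ} (a : Fin k → Fin 2) :
    wtBase c p q (a ∘ Fin.rev) = wtBase c q p a := by
  rw [wtBase, wtBase, prod_filter, prod_filter]
  refine Fintype.prod_equiv Fin.revPerm _ _ fun i => ?_
  simp only [Function.comp_apply, card_filter_lt_comp_rev, card_filter_gt_comp_rev,
    Fin.revPerm_apply, add_right_comm c]

theorem wtSum_comm (c p q : A) (k n : ℕ) : wtSum c p q k n = wtSum c q p k n := by
  have hrev : Function.Involutive fun a : Fin k → Fin 2 => a ∘ Fin.rev :=
    fun a => funext fun i => by simp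
  rw [wtSum, wtSum, sum_filter, sum_filter]
  exact Fintype.sum_equiv hrev.toPerm _ _ fun a => by
    simp [ones_comp_rev, wtBase_comp_rev]

theorem wtSum_succ_succ' (c p q : A) (k n : ℕ) :
    wtSum c p q (k + 1) (n + 1)
      = (c + p * (n + 1)) * wtSum c p q k (n + 1) + wtSum (c + q) p q k n := by
  simpa only [wtSum_comm _ q p] using wtSum_succ_succ c q p k n

theorem wtSum_add_sub_wtSum_add (c p q : A) (k n : ℕ) :
    wtSum (c + p) p q k n - wtSum (c + q) p q k n
      = (n + 1) * (p - q) * wtSum c p q k (n + 1) := by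
  linear_combination wtSum_succ_succ' c p q k n - wtSum_succ_succ c p q k n

end Words

open Real Nat in
theorem hasSum_wtSum_mul_pow_div_factorial {p q : ℝ} (hpq : p ≠ q) (y : ℝ) (n : ℕ)
    (c : ℝ) :
    HasSum (fun m : ℕ => wtSum c p q (n + m) n * y ^ (n + m) / (n + m)!)
      (exp (c * y) / n ! * ((exp (p * y) - exp (q * y)) / (p - q)) ^ n) := by
  induction n generalizing c with
  | zero =>
    simpa [wtSum_zero_right, mul_pow, exp_eq_exp_ℝ] using
      NormedSpace.expSeries_div_hasSum_exp (c * y)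
  | succ n ih =>
    set X := (exp (p * y) - exp (q * y)) / (p - q)
    have tail (b : ℝ) : HasSum
        (fun m => wtSum b p q (n + (m + 1)) n * y ^ (n + (m + 1)) / (n + (m + 1))!)
        (exp (b * y) / n ! * X ^ n - y ^ n / n !) := by
      simpa [wtSum_self, add_assoc] using (hasSum_nat_add_iff' 1).2 (ih b)
    have hpq' : p - q ≠ 0 := sub_ne_zero.2 hpq
    have hterm (m : ℕ) : wtSum c p q (n + 1 + m) (n + 1) * y ^ (n + 1 + m) / (n + 1 + m)! =
        (wtSum (c + p) p q (n + (m + 1)) n * y ^ (n + (m + 1)) / (n + (m + 1))! -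
          wtSum (c + q) p q (n + (m + 1)) n * y ^ (n + (m + 1)) / (n + (m + 1))!) /
          ((n + 1) * (p - q)) := by
      rw [← sub_div, ← sub_mul, wtSum_add_sub_wtSum_add, show n + (m + 1) = n + 1 + m by omega]
      field_simp
    have hval : exp (c * y) / (n + 1)! * X ^ (n + 1) =
        (exp ((c + p) * y) / n ! * X ^ n - y ^ n / (n ! : ℝ) -
          (exp ((c + q) * y) / n ! * X ^ n - y ^ n / n !)) / ((n + 1) * (p - q)) := by
      have hX : exp (p * y) - exp (q * y) = X * (p - q) := (div_mul_cancel₀ _ hpq').symm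
      clear_value X
      have hfactor (a b : ℝ) : exp (c * y) * a / n ! * X ^ n - exp (c * y) * b / n ! * X ^ n =
          exp (c * y) * (a - b) / n ! * X ^ n := by ring
      rw [add_mul, add_mul, exp_add, exp_add, sub_sub_sub_cancel_right, hfactor, hX,
        Nat.factorial_succ]
      push_cast
      field_simp
      ring
    rw [funext hterm, hval]
    exact ((tail (c + p)).sub (tail (c + q))).div_const _

/-- the column exponential generating function of the restricted partition
function. -/
theorem R_column_egf (n : ℕ) (p q : ℝ) (hpq : p ≠ q) (y : ℝ) :
    HasSum
      (fun m : ℕ => R (n + 1 + m) n p q * y ^ (n + m) / ((n + m).factorial : ℝ))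
      (Real.exp y / (n.factorial : ℝ)
        * ((Real.exp (p * y) - Real.exp (q * y)) / (p - q)) ^ n) := by
  have hR (m : ℕ) : R (n + 1 + m) n p q = wtSum 1 p q (n + m) n := by
    rw [show n + 1 + m = n + m + 1 by omega]
    rfl
  simpa only [hR, one_mul] using hasSum_wtSum_mul_pow_div_factorial hpq y n 1
end

section
/- For all integers L > n ≥ 0, the restricted partition function evaluated at p = 1, q = 0 equals the Stirling number of the second kind: R(L, n; 1, 0) = S(L, n+1), the number of set partitions of an L-element set into exactly n+1 nonempty blocks. -/
open Finset

/-- The Stirling number of the second kind `S(m, k)`: the number of partitions of an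
`m`-element set into exactly `k` nonempty blocks. -/
noncomputable def stirling (m k : ℕ) : ℕ :=
  (univ.filter
    (fun P : Finpartition (univ : Finset (Fin m)) => P.parts.card = k)).card

/-!
Both sides satisfy the recurrence `S(m + 1, k + 1) = (k + 1) S(m, k + 1) + S(m, k)` defining
`Nat.stirlingSecond`, with the same initial values. For `R`, split a word according to its last
letter: since `q = 0`, a final `1` does not change the weight, while a final `0` multiplies it by
`1 + p n`, where `n` is the number of ones before it. For partitions of `insert a s`, deleting `a`
leaves a partition of `s` together with the part that contained `a` (or `∅` if `{a}` was a part),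
and `Finpartition.insertInto` undoes this.
-/

namespace Finpartition

variable {α : Type*} [DecidableEq α] {s : Finset α} {a b : α}

lemma ext_part {P Q : Finpartition s} (h : ∀ b ∈ s, P.part b = Q.part b) : P = Q := by
  ext t
  constructor
  · intro ht
    obtain ⟨b, hb, rfl⟩ := P.part_surjOn ht
    rw [h b hb]
    exact Q.part_mem.2 hb
  · intro ht
    obtain ⟨b, hb, rfl⟩ := Q.part_surjOn ht
    rw [← h b hb]
    exact P.part_mem.2 hb

variable (Q : Finpartition s) {t : Finset α}

lemma subset_of_mem_insert_empty_parts (ht : t ∈ insert ∅ Q.parts) : t ⊆ s := by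
  rcases mem_insert.1 ht with rfl | ht
  · exact empty_subset s
  · exact Q.le ht

lemma disjoint_of_mem_insert_empty_parts {d : Finset α} (hd : d ∈ Q.parts)
    (ht : t ∈ insert ∅ Q.parts) (hdt : d ≠ t) : Disjoint d t := by
  rcases mem_insert.1 ht with rfl | ht
  · exact disjoint_empty_right d
  · exact Q.disjoint hd ht hdt

lemma parts_avoid_of_mem_insert_empty (ht : t ∈ insert ∅ Q.parts) :
    (Q.avoid t).parts = Q.parts.erase t := by
  ext c
  rw [mem_avoid, mem_erase]
  constructor
  · rintro ⟨d, hd, hdt, rfl⟩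
    have hne : d ≠ t := fun h => hdt h.le
    rw [sdiff_eq_self_of_disjoint (Q.disjoint_of_mem_insert_empty_parts hd ht hne)]
    exact ⟨hne, hd⟩
  · rintro ⟨hct, hc⟩
    have hdis := Q.disjoint_of_mem_insert_empty_parts hc ht hct
    refine ⟨c, hc, fun hsub => Q.ne_empty hc ?_, sdiff_eq_self_of_disjoint hdis⟩
    exact disjoint_self.1 (hdis.mono_right hsub)

/-- Adds the new element `a` to the part `t` of `Q`, or as the singleton part `{a}` if `t = ∅`. -/
def insertInto (ha : a ∉ s) (t : Finset α) (ht : t ∈ insert ∅ Q.parts) :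
    Finpartition (insert a s) :=
  (Q.avoid t).extend (b := insert a t) (insert_ne_empty a t)
    (disjoint_insert_right.2 ⟨fun h => ha (mem_sdiff.1 h).1, sdiff_disjoint⟩)
    (by rw [sup_eq_union, union_insert, sdiff_union_of_subset
      (Q.subset_of_mem_insert_empty_parts ht)])

lemma card_parts_insertInto (ha : a ∉ s) (ht : t ∈ insert ∅ Q.parts) :
    #(Q.insertInto ha t ht).parts = #Q.parts + if t = ∅ then 1 else 0 := by
  rw [insertInto, card_extend, parts_avoid_of_mem_insert_empty Q ht]
  split_ifs with h
  · rw [h, erase_eq_of_notMem Q.empty_notMem_parts]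
  · have ht' : t ∈ Q.parts := (mem_insert.1 ht).resolve_left h
    rw [card_erase_of_mem ht', Nat.sub_add_cancel (card_pos.2 ⟨t, ht'⟩), add_zero]

lemma part_insertInto_of_mem (ha : a ∉ s) (ht : t ∈ insert ∅ Q.parts)
    (hb : b ∈ insert a t) : (Q.insertInto ha t ht).part b = insert a t :=
  part_eq_of_mem _ (mem_insert_self _ _) hb

lemma part_insertInto_of_notMem (ha : a ∉ s) (ht : t ∈ insert ∅ Q.parts) (hb : b ∈ s)
    (hbt : b ∉ t) : (Q.insertInto ha t ht).part b = Q.part b := by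
  refine part_eq_of_mem _ (mem_insert_of_mem ?_) (Q.mem_part_self.2 hb)
  rw [parts_avoid_of_mem_insert_empty Q ht]
  exact mem_erase.2 ⟨fun h => hbt (h ▸ Q.mem_part_self.2 hb), Q.part_mem.2 hb⟩

def erase (P : Finpartition (insert a s)) (ha : a ∉ s) : Finpartition s :=
  (P.avoid {a}).copy (by rw [sdiff_singleton_eq_erase, erase_insert ha])

lemma part_erase (P : Finpartition (insert a s)) (ha : a ∉ s) (hb : b ∈ s) :
    (P.erase ha).part b = (P.part b).erase a := by
  have hba : b ∉ ({a} : Finset α) := fun h => ha (mem_singleton.1 h ▸ hb)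
  have hbP : b ∈ P.part b := P.mem_part_self.2 (mem_insert_of_mem hb)
  rw [← sdiff_singleton_eq_erase]
  refine part_eq_of_mem _ ?_ (mem_sdiff.2 ⟨hbP, hba⟩)
  exact P.mem_avoid.2
    ⟨P.part b, P.part_mem.2 (mem_insert_of_mem hb), fun h => hba (h hbP), rfl⟩

lemma erase_insertInto (ha : a ∉ s) (ht : t ∈ insert ∅ Q.parts) :
    (Q.insertInto ha t ht).erase ha = Q := by
  have hts := Q.subset_of_mem_insert_empty_parts ht
  refine ext_part fun b hb => ?_
  rw [part_erase _ ha hb]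
  by_cases hbt : b ∈ t
  · rw [part_insertInto_of_mem _ ha ht (mem_insert_of_mem hbt), erase_insert fun h => ha (hts h)]
    have ht' : t ∈ Q.parts := (mem_insert.1 ht).resolve_left (ne_empty_of_mem hbt)
    exact (part_eq_of_mem _ ht' hbt).symm
  · rw [part_insertInto_of_notMem _ ha ht hb hbt,
      erase_eq_of_notMem fun h => ha (Q.part_subset b h)]

lemma erase_part_insertInto (ha : a ∉ s) (ht : t ∈ insert ∅ Q.parts) :
    ((Q.insertInto ha t ht).part a).erase a = t := by
  rw [part_insertInto_of_mem _ ha ht (mem_insert_self a t),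
    erase_insert fun h => ha (Q.subset_of_mem_insert_empty_parts ht h)]

lemma erase_part_mem_insert_empty_parts_erase (P : Finpartition (insert a s)) (ha : a ∉ s) :
    (P.part a).erase a ∈ insert ∅ (P.erase ha).parts := by
  rcases ((P.part a).erase a).eq_empty_or_nonempty with h | ⟨c, hc⟩
  · exact h ▸ mem_insert_self _ _
  obtain ⟨hca, hcP⟩ := mem_erase.1 hc
  have hcs : c ∈ s := (mem_insert.1 (P.part_subset a hcP)).resolve_left hca
  refine mem_insert_of_mem ?_
  rw [← part_eq_of_mem _ (P.part_mem.2 (mem_insert_self a s)) hcP, ← part_erase _ ha hcs]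
  exact (Finpartition.part_mem _).2 hcs

lemma insertInto_erase (P : Finpartition (insert a s)) (ha : a ∉ s) :
    (P.erase ha).insertInto ha ((P.part a).erase a) (P.erase_part_mem_insert_empty_parts_erase ha)
      = P := by
  have haP : a ∈ P.part a := P.mem_part_self.2 (mem_insert_self a s)
  have hins : insert a ((P.part a).erase a) = P.part a := insert_erase haP
  refine ext_part fun b hb => ?_
  by_cases hbP : b ∈ P.part a
  · rw [part_insertInto_of_mem _ _ _ (hins.symm ▸ hbP), hins,
      part_eq_of_mem _ (P.part_mem.2 (mem_insert_self a s)) hbP]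
  have hbs : b ∈ s := (mem_insert.1 hb).resolve_left fun h => hbP (h ▸ haP)
  rw [part_insertInto_of_notMem _ ha _ hbs fun h => hbP (mem_erase.1 h).2, part_erase _ ha hbs,
    erase_eq_of_notMem]
  intro haB
  rw [part_eq_of_mem _ (P.part_mem.2 hb) haB] at hbP
  exact hbP (P.mem_part_self.2 hb)

lemma card_filter_insert_empty_parts (k : ℕ) :
    #{t ∈ insert ∅ Q.parts | #Q.parts + (if t = ∅ then 1 else 0) = k + 1} =
      (if #Q.parts = k then 1 else 0) + if #Q.parts = k + 1 then k + 1 else 0 := by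
  have hparts : {t ∈ Q.parts | #Q.parts + (if t = ∅ then 1 else 0) = k + 1} =
      {t ∈ Q.parts | #Q.parts = k + 1} :=
    filter_congr fun t ht => by rw [if_neg (Q.ne_empty ht), add_zero]
  rw [filter_insert, hparts, filter_const]
  by_cases hk : #Q.parts = k
  · simp [hk]
  · split_ifs <;> simp_all

theorem card_filter_card_parts_insert (ha : a ∉ s) (k : ℕ) :
    #{P : Finpartition (insert a s) | #P.parts = k + 1} =
      (k + 1) * #{Q : Finpartition s | #Q.parts = k + 1} +
        #{Q : Finpartition s | #Q.parts = k} := by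
  set T := (univ : Finset (Finpartition s)).sigma
    fun Q => {t ∈ insert ∅ Q.parts | #Q.parts + (if t = ∅ then 1 else 0) = k + 1}
  have hT : #{P : Finpartition (insert a s) | #P.parts = k + 1} = #T := by
    refine card_bij' (fun P _ => ⟨P.erase ha, (P.part a).erase a⟩)
      (fun x hx => x.1.insertInto ha x.2 (mem_filter.1 (mem_sigma.1 hx).2).1) ?_ ?_ ?_ ?_
    · intro P hP
      have ht := P.erase_part_mem_insert_empty_parts_erase ha
      have hcard := card_parts_insertInto (P.erase ha) ha ht
      rw [insertInto_erase, (mem_filter.1 hP).2] at hcard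
      exact mem_sigma.2 ⟨mem_univ _, mem_filter.2 ⟨ht, hcard.symm⟩⟩
    · rintro ⟨Q, t⟩ hx
      obtain ⟨ht, hcard⟩ := mem_filter.1 (mem_sigma.1 hx).2
      exact mem_filter.2 ⟨mem_univ _, (card_parts_insertInto Q ha ht).trans hcard⟩
    · intro P _
      exact P.insertInto_erase ha
    · rintro ⟨Q, t⟩ hx
      have ht := (mem_filter.1 (mem_sigma.1 hx).2).1
      exact Sigma.ext (Q.erase_insertInto ha ht) (heq_of_eq (Q.erase_part_insertInto ha ht))
  rw [hT, card_sigma]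
  simp only [card_filter_insert_empty_parts, sum_add_distrib, sum_ite, sum_const_zero, add_zero,
    sum_const, smul_eq_mul]
  ring

theorem card_filter_card_parts_eq_stirlingSecond {α : Type*} [DecidableEq α] (s : Finset α)
    (k : ℕ) : #{P : Finpartition s | #P.parts = k} = Nat.stirlingSecond #s k := by
  induction s using Finset.induction_on generalizing k with
  | empty =>
    have hparts (P : Finpartition (∅ : Finset α)) : P.parts = ∅ := P.parts_eq_empty_iff.2 rfl
    have : Unique (Finpartition (∅ : Finset α)) := inferInstanceAs (Unique (Finpartition ⊥))
    cases k <;> simp [hparts, eq_comm]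
  | insert a s ha ih =>
    rw [card_insert_of_notMem ha]
    cases k with
    | zero =>
      simp [parts_eq_empty_iff]
    | succ k =>
      rw [card_filter_card_parts_insert ha, ih, ih, Nat.stirlingSecond_succ_succ]

end Finpartition

lemma ones_eq_sum {m : ℕ} (a : Fin m → Fin 2) : ones a = ∑ i, (a i : ℕ) := by
  rw [ones, card_filter]
  refine sum_congr rfl fun i _ => ?_
  generalize a i = x
  fin_cases x <;> rfl

lemma ones_snoc {m : ℕ} (a : Fin m → Fin 2) (x : Fin 2) :
    ones (Fin.snoc a x : Fin (m + 1) → Fin 2) = ones a + x := by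
  simp [ones_eq_sum, Fin.sum_univ_castSucc]

lemma wt_zero_eq_prod (p : ℝ) {m : ℕ} (a : Fin m → Fin 2) :
    wt p 0 a = ∏ i, if a i = 0 then 1 + p * #{j | j < i ∧ a j = 1} else 1 := by
  simp [wt, prod_filter]

lemma card_filter_lt_castSucc_snoc {m : ℕ} (a : Fin m → Fin 2) (x : Fin 2) (i : Fin m) :
    #{j : Fin (m + 1) | j < i.castSucc ∧ (Fin.snoc a x : Fin (m + 1) → Fin 2) j = 1} =
      #{j | j < i ∧ a j = 1} := by
  rw [card_filter, card_filter, Fin.sum_univ_castSucc]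
  simp [(Fin.castSucc_lt_last i).not_gt]

lemma card_filter_lt_last_snoc {m : ℕ} (a : Fin m → Fin 2) (x : Fin 2) :
    #{j : Fin (m + 1) | j < Fin.last m ∧ (Fin.snoc a x : Fin (m + 1) → Fin 2) j = 1} =
      ones a := by
  rw [card_filter, ones, card_filter, Fin.sum_univ_castSucc]
  simp

lemma wt_snoc_zero (p : ℝ) {m : ℕ} (a : Fin m → Fin 2) :
    wt p 0 (Fin.snoc a 0 : Fin (m + 1) → Fin 2) = (1 + p * ones a) * wt p 0 a := by
  rw [wt_zero_eq_prod, Fin.prod_univ_castSucc, wt_zero_eq_prod]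
  simp [card_filter_lt_castSucc_snoc, card_filter_lt_last_snoc, mul_comm]

lemma wt_snoc_one (p : ℝ) {m : ℕ} (a : Fin m → Fin 2) :
    wt p 0 (Fin.snoc a 1 : Fin (m + 1) → Fin 2) = wt p 0 a := by
  rw [wt_zero_eq_prod, Fin.prod_univ_castSucc, wt_zero_eq_prod]
  simp [card_filter_lt_castSucc_snoc]

lemma R_add_two (m n : ℕ) (p : ℝ) :
    R (m + 2) n p 0 = (1 + p * n) * R (m + 1) n p 0 +
      ∑ a ∈ {a : Fin m → Fin 2 | ones a + 1 = n}, wt p 0 a := by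
  rw [R, R, show m + 2 - 1 = m + 1 from rfl, Nat.add_sub_cancel]
  simp only [sum_filter, mul_sum]
  rw [← (Fin.snocEquiv fun _ => Fin 2).sum_comp, Fintype.sum_prod_type, Fin.sum_univ_two,
    ← sum_add_distrib, ← sum_add_distrib]
  refine sum_congr rfl fun a _ => ?_
  simp only [Fin.snocEquiv, Equiv.coe_fn_mk, ones_snoc, wt_snoc_zero, wt_snoc_one]
  split_ifs <;> simp_all

lemma R_add_two_zero (m : ℕ) (p : ℝ) : R (m + 2) 0 p 0 = R (m + 1) 0 p 0 := by
  simp [R_add_two]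

lemma R_add_two_succ (m n : ℕ) (p : ℝ) :
    R (m + 2) (n + 1) p 0 = (1 + p * (n + 1)) * R (m + 1) (n + 1) p 0 + R (m + 1) n p 0 := by
  rw [R_add_two]
  simp [R]

theorem R_one_zero_eq_stirlingSecond (m n : ℕ) :
    R (m + 1) n 1 0 = Nat.stirlingSecond (m + 1) (n + 1) := by
  induction m generalizing n with
  | zero => cases n <;> simp [R, ones, wt, Nat.stirlingSecond]
  | succ m ih =>
    cases n with
    | zero => simp [R_add_two_zero, ih, Nat.stirlingSecond_one_right]
    | succ n =>
      rw [R_add_two_succ, ih, ih, Nat.stirlingSecond_succ_succ (m + 1)]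
      push_cast
      ring

/-- at `p = 1`, `q = 0` the restricted partition function equals the
Stirling number of the second kind `S(L, n+1)`. -/
theorem R_one_zero_eq_stirling (L n : ℕ) (h : n < L) :
    R L n 1 0 = (stirling L (n + 1) : ℝ) := by
  obtain ⟨m, rfl⟩ : ∃ m, L = m + 1 := ⟨L - 1, by omega⟩
  rw [R_one_zero_eq_stirlingSecond, stirling,
    Finpartition.card_filter_card_parts_eq_stirlingSecond, card_univ, Fintype.card_fin]
end

section
/- Let L > n ≥ 1 be integers and let p, q be real parameters with q ≠ −1. Then the weighted sum over configurations whose last site (immediately behind the tracer) is occupied satisfies: ∑_{a : a_{L−1} = 1} w_{p,q}(a) = (1+q)^{L−n−1} · R(L−1, n−1; p/(1+q), q/(1+q)), where the sum runs over all words a of length L−1 with entries in {0,1} having exactly n ones and a_{L−1} = 1. -/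
/-!
Deleting the occupied last site is a bijection from the words on the left onto the words of
length `L - 2` with `n - 1` ones. The deleted `1` stands after every `0`, so it raises each
`n_i` by one and leaves each `m_i` unchanged: with `m_i, n_i` counted in the short word, the
factor of a zero becomes `1 + p m_i + q (n_i + 1) = (1 + q) (1 + p/(1+q) m_i + q/(1+q) n_i)`.
The short word has `L - 1 - n` zeros, which gives the power of `1 + q`.
-/

open Finset

lemma sum_filter_snoc_last {α M : Type*} [DecidableEq α] [Fintype α] [AddCommMonoid M] {m : ℕ}
    (x : α) (P : (Fin (m + 1) → α) → Prop) [DecidablePred P] (f : (Fin (m + 1) → α) → M) :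
    ∑ a ∈ univ.filter (fun a => P a ∧ a (Fin.last m) = x), f a
      = ∑ b ∈ univ.filter (fun b : Fin m → α => P (Fin.snoc b x)), f (Fin.snoc b x) := by
  symm
  refine sum_nbij' (fun b => Fin.snoc b x) Fin.init ?_ ?_ ?_ ?_ ?_
  · intro b hb
    simpa using hb
  · intro a ha
    simp only [mem_filter, mem_univ, true_and] at ha ⊢
    rw [← ha.2, Fin.snoc_init_self]
    exact ha.1
  · intro b _
    exact Fin.init_snoc _ _
  · intro a ha
    simp only [mem_filter, mem_univ, true_and] at ha
    simp only [← ha.2, Fin.snoc_init_self]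
  · intro _ _
    rfl

section SnocOne

variable {m : ℕ} (b : Fin m → Fin 2)

lemma ones_snoc_one : ones (Fin.snoc b 1 : Fin (m + 1) → Fin 2) = ones b + 1 := by
  unfold ones
  rw [card_filter, card_filter, Fin.sum_univ_castSucc]
  simp

lemma card_filter_eq_zero_eq_sub_ones : #(univ.filter (fun i => b i = 0)) = m - ones b := by
  have hsplit := card_filter_add_card_filter_not (s := univ) (fun i => b i = 0)
  have hnot : univ.filter (fun i => ¬ b i = 0) = univ.filter (fun i => b i = 1) :=
    filter_congr fun i _ => by generalize b i = x; fin_cases x <;> simp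
  rw [hnot, card_univ, Fintype.card_fin] at hsplit
  unfold ones
  omega

lemma filter_snoc_one_eq_zero :
    univ.filter (fun i => (Fin.snoc b 1 : Fin (m + 1) → Fin 2) i = 0)
      = (univ.filter (fun i => b i = 0)).map Fin.castSuccEmb := by
  ext j
  cases j using Fin.lastCases <;> simp

lemma card_ones_before_snoc_one (i : Fin m) :
    #(univ.filter (fun j => j < i.castSucc ∧ (Fin.snoc b 1 : Fin (m + 1) → Fin 2) j = 1))
      = #(univ.filter (fun j => j < i ∧ b j = 1)) := by
  rw [card_filter, card_filter, Fin.sum_univ_castSucc]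
  simp [(Fin.castSucc_lt_last i).not_gt]

lemma card_ones_after_snoc_one (i : Fin m) :
    #(univ.filter (fun j => i.castSucc < j ∧ (Fin.snoc b 1 : Fin (m + 1) → Fin 2) j = 1))
      = #(univ.filter (fun j => i < j ∧ b j = 1)) + 1 := by
  rw [card_filter, card_filter, Fin.sum_univ_castSucc]
  simp [Fin.castSucc_lt_last]

lemma wt_snoc_one_s17 {p q : ℝ} (hq : 1 + q ≠ 0) :
    wt p q (Fin.snoc b 1 : Fin (m + 1) → Fin 2)
      = (1 + q) ^ (m - ones b) * wt (p / (1 + q)) (q / (1 + q)) b := by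
  unfold wt
  rw [filter_snoc_one_eq_zero, prod_map, ← card_filter_eq_zero_eq_sub_ones, ← prod_const, ← prod_mul_distrib]
  refine prod_congr rfl fun i _ => ?_
  rw [Fin.castSuccEmb_apply, card_ones_before_snoc_one, card_ones_after_snoc_one]
  push_cast
  field_simp
  ring

end SnocOne

/-- the weighted sum over configurations whose last site (immediately
behind the tracer, word position `L - 1`, i.e. index `L - 2`) is occupied. -/
theorem density_last (L n : ℕ) (hn1 : 1 ≤ n) (hnL : n < L) (p q : ℝ) (hq : q ≠ -1) :
    (∑ a ∈ univ.filter (fun a : Fin (L - 1) → Fin 2 =>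
        ones a = n ∧ a ⟨L - 2, by omega⟩ = 1), wt p q a)
    = (1 + q) ^ (L - n - 1) * R (L - 1) (n - 1) (p / (1 + q)) (q / (1 + q)) := by
  have hq' : 1 + q ≠ 0 := fun h => hq (by linarith)
  obtain ⟨k, rfl⟩ : ∃ k, n = k + 1 := ⟨n - 1, by omega⟩
  obtain ⟨m, rfl⟩ : ∃ m, L = m + 2 := ⟨L - 2, by omega⟩
  rw [show m + 2 - (k + 1) - 1 = m - k by omega]
  change ∑ a ∈ univ.filter (fun a : Fin (m + 1) → Fin 2 => ones a = k + 1 ∧ a (Fin.last m) = 1),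
      wt p q a = _
  calc _ = ∑ b ∈ univ.filter (fun b : Fin m → Fin 2 => ones b = k), wt p q (Fin.snoc b 1) := by
        simp only [sum_filter_snoc_last, ones_snoc_one, add_left_inj]
    _ = ∑ b ∈ univ.filter (fun b : Fin m → Fin 2 => ones b = k),
          (1 + q) ^ (m - k) * wt (p / (1 + q)) (q / (1 + q)) b :=
        sum_congr rfl fun b hb => by rw [wt_snoc_one_s17 b hq', (mem_filter.1 hb).2]
    _ = _ := (mul_sum _ _ _).symm
end
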